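/- arXiv:1601.05900 — 3 statements merged into one kernel-verified Lean document; each statement's English description precedes it below -/
import Mathlib

section
/- There is no clustering function that simultaneously satisfies (ε, δ)-additive perturbation robustness for any δ ≤ 2/3 and ε > 0, replication invariance, and the three-body rule. -/
open Finset

def IsDissim {X : Type*} (d : X → X → ℝ) : Prop :=
  (∀ x y, d x y = d y x) ∧ (∀ x, d x x = 0) ∧ (∀ x y, 0 ≤ d x y)

open Classical in
noncomputable def clDist {X : Type*} [Fintype X] {k l : ℕ}
    (c : X → Fin k) (c' : X → Fin l) : ℝ :=
  ((Finset.univ.filter fun p : X × X =>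
      p.1 ≠ p.2 ∧ ¬((c p.1 = c p.2) ↔ (c' p.1 = c' p.2))).card : ℝ) /
    ((Fintype.card X : ℝ) * ((Fintype.card X : ℝ) - 1))

structure ClusteringFunction where
  F : ∀ (X : Type) [Fintype X] [DecidableEq X], (X → X → ℝ) → (k : ℕ) → X → Fin k

/-- `(ε, δ)`-additive perturbation robustness. -/
def AddRobust (𝓕 : ClusteringFunction) (ε δ : ℝ) : Prop :=
  ∀ (X : Type) [Fintype X] [DecidableEq X] (d d' : X → X → ℝ),
    IsDissim d → IsDissim d' →
    (∀ x y, d x y - ε ≤ d' x y ∧ d' x y ≤ d x y + ε) →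
    ∀ k : ℕ, clDist (𝓕.F X d k) (𝓕.F X d' k) < δ

/-- Replicating every point `r` times leaves the clustering of the originals unchanged,
and every replica is placed in the cluster of its original point. -/
def ReplicationInvariant (𝓕 : ClusteringFunction) : Prop :=
  ∀ (X : Type) [Fintype X] [DecidableEq X] (d : X → X → ℝ), IsDissim d →
    ∀ (r : ℕ), 0 < r → ∀ (k : ℕ) (x y : X) (i j : Fin r),
      (𝓕.F (X × Fin r) (fun p q => d p.1 q.1) k (x, i) =
        𝓕.F (X × Fin r) (fun p q => d p.1 q.1) k (y, j) ↔
        𝓕.F X d k x = 𝓕.F X d k y)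

/-- Given exactly three points, asked for two clusters, the two closest points are grouped. -/
def ThreeBody (𝓕 : ClusteringFunction) : Prop :=
  ∀ (X : Type) [Fintype X] [DecidableEq X] (d : X → X → ℝ), IsDissim d →
    ∀ a b c : X, a ≠ b → a ≠ c → b ≠ c →
      (Finset.univ : Finset X) = {a, b, c} →
      d b c < d a b → d b c < d a c →
      (𝓕.F X d 2 b = 𝓕.F X d 2 c ∧ 𝓕.F X d 2 a ≠ 𝓕.F X d 2 b)

/-!
Take three points and the dissimilarity in which one point `a` is at distance `2ε` from the
other two, which are at distance `ε` from each other. Moving the role of `a` to another point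
changes every distance by at most `ε`, yet the three-body rule forces the two clusterings into
two clusters to be `{a} | rest` and `{b} | rest`, which disagree on four of the six ordered pairs
of distinct points: their distance is `2/3 ≥ δ`.
-/

section Isolating

variable {X : Type*} [DecidableEq X]

def isolating (a : X) (s : ℝ) (x y : X) : ℝ :=
  if x = y then 0 else if x = a ∨ y = a then 2 * s else s

theorem isDissim_isolating (a : X) {s : ℝ} (hs : 0 ≤ s) : IsDissim (isolating a s) := by
  refine ⟨fun x y => ?_, fun x => by simp [isolating], fun x y => ?_⟩
  · unfold isolating
    split_ifs <;> first | rfl | (exfalso; tauto)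
  · unfold isolating
    split_ifs <;> linarith

theorem isolating_additive_perturbation (a b : X) {s : ℝ} (hs : 0 ≤ s) (x y : X) :
    isolating a s x y - s ≤ isolating b s x y ∧ isolating b s x y ≤ isolating a s x y + s := by
  unfold isolating
  split_ifs <;> constructor <;> linarith

end Isolating

theorem ThreeBody.eq_iff_of_isolating {𝓕 : ClusteringFunction} (h : ThreeBody 𝓕)
    {X : Type} [Fintype X] [DecidableEq X] {a b c : X} (hab : a ≠ b) (hac : a ≠ c) (hbc : b ≠ c)
    (huniv : (univ : Finset X) = {a, b, c}) {s : ℝ} (hs : 0 < s) (x y : X) :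
    𝓕.F X (isolating a s) 2 x = 𝓕.F X (isolating a s) 2 y ↔ (x = a ↔ y = a) := by
  obtain ⟨hFbc, hFab⟩ := h X (isolating a s) (isDissim_isolating a hs.le) a b c hab hac hbc huniv
    (by simp [isolating, hab, hbc, hab.symm, hac.symm]; linarith)
    (by simp [isolating, hac, hbc, hab.symm, hac.symm]; linarith)
  have hmem : ∀ z : X, z = a ∨ z = b ∨ z = c := fun z => by
    simpa [huniv] using mem_univ z
  rcases hmem x with rfl | rfl | rfl <;> rcases hmem y with rfl | rfl | rfl <;>
    simp_all [eq_comm, Ne.symm]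

theorem clDist_eq_two_thirds {k l : ℕ} (c : Fin 3 → Fin k) (c' : Fin 3 → Fin l)
    (hc : ∀ x y, c x = c y ↔ (x = 0 ↔ y = 0)) (hc' : ∀ x y, c' x = c' y ↔ (x = 2 ↔ y = 2)) :
    clDist c c' = 2 / 3 := by
  have hcard : (univ.filter fun p : Fin 3 × Fin 3 =>
      p.1 ≠ p.2 ∧ ¬((c p.1 = c p.2) ↔ (c' p.1 = c' p.2))).card = 4 := by
    simp only [hc, hc']
    decide
  calc clDist c c' = ((4 : ℕ) : ℝ) / ((3 : ℕ) * ((3 : ℕ) - 1)) := by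
        rw [clDist, Fintype.card_fin, ← hcard]
        congr!
    _ = 2 / 3 := by norm_num

theorem no_additive_perturbation_robust_clustering_function
    (ε δ : ℝ) (hε : 0 < ε) (hδ : δ ≤ 2 / 3) :
    ¬ ∃ 𝓕 : ClusteringFunction,
        AddRobust 𝓕 ε δ ∧ ReplicationInvariant 𝓕 ∧ ThreeBody 𝓕 := by
  rintro ⟨𝓕, hRob, -, hTB⟩
  have hdist := hRob (Fin 3) (isolating 0 ε) (isolating 2 ε) (isDissim_isolating 0 hε.le)
    (isDissim_isolating 2 hε.le) (isolating_additive_perturbation 0 2 hε.le) 2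
  rw [clDist_eq_two_thirds _ _
    (hTB.eq_iff_of_isolating (b := 1) (c := 2) (by decide) (by decide) (by decide) (by decide) hε)
    (hTB.eq_iff_of_isolating (b := 0) (c := 1) (by decide) (by decide) (by decide) (by decide) hε)]
    at hdist
  linarith
end

section
/- Consider the optimal k-medoids clustering function F. If (X,d) is (δ, 1, c₀, k)-uniquely optimal, then (X,d) is (ε, δ, k)-additive perturbation robust for all ε with ε·C(n,2) ≤ c₀; in particular for ε < 2c₀/(n(n−1)). -/
/-!
Write `c = F d` and `c' = F d'`. Moving a medoid-based cost from `d` to `d'` costs at most `ε` per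
non-medoid point, i.e. at most `ε (n - k)` in total, so by optimality of `c'` for `d'`,
`cost_d c' ≤ cost_d' c' + ε (n - k) ≤ cost_d' c + ε (n - k) ≤ cost_d c + 2 ε (n - k)`.
For `k ≥ 2` we have `2 (n - k) ≤ n (n - 1) / 2`, so `c'` is `c₀`-near-optimal for `d` and unique
optimality puts it within `δ` of `c`. For `k ≤ 1` there is only one clustering.
-/

open Finset

/-- The `k`-medoids cost of a clustering `c` of `(X, d)`:
`∑ i, min_{m ∈ Cᵢ} ∑_{x ∈ Cᵢ} d(x, m)`. -/
noncomputable def kmedoidsCost {X : Type*} [Fintype X] {k : ℕ}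
    (d : X → X → ℝ) (c : X → Fin k) : ℝ :=
  ∑ i : Fin k,
    sInf ((fun m => ∑ x ∈ Finset.univ.filter (fun x => c x = i), d x m) ''
      {m : X | c m = i})

namespace KMedoids

variable {X : Type*} [Fintype X] {k : ℕ}

noncomputable def medoidCost (d : X → X → ℝ) (c : X → Fin k) (i : Fin k) (m : X) : ℝ :=
  ∑ x ∈ univ.filter (fun x => c x = i), d x m

theorem kmedoidsCost_eq_sum_sInf (d : X → X → ℝ) (c : X → Fin k) :
    kmedoidsCost d c = ∑ i, sInf (medoidCost d c i '' {m | c m = i}) :=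
  rfl

theorem sInf_medoidCost_le (d : X → X → ℝ) (c : X → Fin k) {i : Fin k} {m : X} (hm : c m = i) :
    sInf (medoidCost d c i '' {m | c m = i}) ≤ medoidCost d c i m :=
  csInf_le (Set.toFinite _).bddBelow ⟨m, hm, rfl⟩

theorem exists_sInf_medoidCost_eq (d : X → X → ℝ) {c : X → Fin k}
    (hc : Function.Surjective c) (i : Fin k) :
    ∃ m, c m = i ∧ sInf (medoidCost d c i '' {m | c m = i}) = medoidCost d c i m := by
  obtain ⟨m, hm⟩ := hc i
  have hne : (medoidCost d c i '' {m | c m = i}).Nonempty := ⟨_, m, hm, rfl⟩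
  obtain ⟨m₀, hm₀, hmin⟩ := hne.csInf_mem (Set.toFinite _)
  exact ⟨m₀, hm₀, hmin.symm⟩

/-- The medoid contributes `d m m = d' m m = 0`, so only the other points of the cluster move. -/
theorem medoidCost_le_add_of_sub_le {d d' : X → X → ℝ} (hd : ∀ x, d x x = 0)
    (hd' : ∀ x, d' x x = 0) {ε : ℝ} (hp : ∀ x y, d' x y - d x y ≤ ε) (c : X → Fin k)
    {i : Fin k} {m : X} (hm : c m = i) :
    medoidCost d' c i m ≤
      medoidCost d c i m + ε * (#(univ.filter fun x => c x = i) - 1 : ℝ) := by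
  classical
  set S := univ.filter fun x => c x = i
  have hmS : m ∈ S := mem_filter.2 ⟨mem_univ m, hm⟩
  have hcard : (#(S.erase m) : ℝ) = #S - 1 := by
    rw [card_erase_of_mem hmS, Nat.cast_pred (card_pos.2 ⟨m, hmS⟩)]
  have hsum : ∑ x ∈ S.erase m, d' x m ≤ ∑ x ∈ S.erase m, (d x m + ε) :=
    sum_le_sum fun x _ => by linarith [hp x m]
  unfold medoidCost
  rw [← sum_erase_add S _ hmS, ← sum_erase_add S _ hmS, hd m, hd' m, add_zero, add_zero,
    ← hcard]
  rwa [sum_add_distrib, sum_const, nsmul_eq_mul, mul_comm] at hsum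

theorem sum_card_fiber_sub_one (c : X → Fin k) :
    ∑ i, (#(univ.filter fun x => c x = i) - 1 : ℝ) = Fintype.card X - k := by
  classical
  have hfib : ∑ i, (#(univ.filter fun x => c x = i) : ℝ) = Fintype.card X := by
    rw [← Nat.cast_sum, ← card_univ,
      card_eq_sum_card_fiberwise (t := univ) fun x _ => mem_univ (c x)]
  rw [sum_sub_distrib, hfib, sum_const, card_univ, Fintype.card_fin, nsmul_one]

theorem kmedoidsCost_le_add_of_sub_le {d d' : X → X → ℝ} (hd : ∀ x, d x x = 0)
    (hd' : ∀ x, d' x x = 0) {ε : ℝ} (hp : ∀ x y, d' x y - d x y ≤ ε) {c : X → Fin k}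
    (hc : Function.Surjective c) :
    kmedoidsCost d' c ≤ kmedoidsCost d c + ε * (Fintype.card X - k) := by
  rw [kmedoidsCost_eq_sum_sInf, kmedoidsCost_eq_sum_sInf, ← sum_card_fiber_sub_one c,
    mul_sum, ← sum_add_distrib]
  refine sum_le_sum fun i _ => ?_
  obtain ⟨m, hm, hmin⟩ := exists_sInf_medoidCost_eq d hc i
  rw [hmin]
  exact (sInf_medoidCost_le d' c hm).trans (medoidCost_le_add_of_sub_le hd hd' hp c hm)

theorem four_mul_sub_le_mul_sub_one (n : ℕ) {k : ℕ} (hk : 2 ≤ k) :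
    4 * ((n : ℝ) - k) ≤ n * (n - 1) := by
  have hk' : (2 : ℝ) ≤ k := by exact_mod_cast hk
  nlinarith [sq_nonneg ((n : ℝ) - 5 / 2)]

end KMedoids

open KMedoids in
/-- If `(X, d)` is `(δ, 1, c₀, k)`-uniquely optimal for the optimal `k`-medoids function `F`,
then `(X, d)` is `(ε, δ, k)`-additive perturbation robust for all `ε` with `ε·C(n,2) ≤ c₀`. -/
theorem kmedoids_uniquely_optimal_implies_additive_robust
    {X : Type*} [Fintype X] {k : ℕ}
    (F : (X → X → ℝ) → (X → Fin k))
    (hF : ∀ e : X → X → ℝ, IsDissim e → Function.Surjective (F e) ∧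
      ∀ c : X → Fin k, Function.Surjective c → kmedoidsCost e (F e) ≤ kmedoidsCost e c)
    (d : X → X → ℝ) (hd : IsDissim d)
    (δ c₀ : ℝ)
    (hUO : ∀ c : X → Fin k, Function.Surjective c →
      kmedoidsCost d c ≤ 1 * kmedoidsCost d (F d) + c₀ → clDist (F d) c < δ)
    (ε : ℝ) (hε : 0 < ε)
    (hεbound : ε * (Nat.choose (Fintype.card X) 2 : ℝ) ≤ c₀) :
    ∀ d' : X → X → ℝ, IsDissim d' → (∀ x y, |d' x y - d x y| ≤ ε) →
      clDist (F d) (F d') < δ := by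
  intro d' hd' hp
  obtain ⟨hsurj, -⟩ := hF d hd
  obtain ⟨hsurj', hopt'⟩ := hF d' hd'
  refine hUO (F d') hsurj' ?_
  rw [one_mul]
  have hc₀ : 0 ≤ c₀ := (mul_nonneg hε.le (Nat.cast_nonneg _)).trans hεbound
  rcases le_or_gt k 1 with hk | hk
  · have : Subsingleton (Fin k) := Fin.subsingleton_iff_le_one.2 hk
    rw [Subsingleton.elim (F d') (F d)]
    linarith
  have hbound : 2 * (ε * (Fintype.card X - k)) ≤ c₀ := by
    refine le_trans ?_ hεbound
    rw [Nat.cast_choose_two]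
    nlinarith [four_mul_sub_le_mul_sub_one (Fintype.card X) hk]
  calc kmedoidsCost d (F d')
      ≤ kmedoidsCost d' (F d') + ε * (Fintype.card X - k) :=
        kmedoidsCost_le_add_of_sub_le hd'.2.1 hd.2.1
          (fun x y => (le_abs_self _).trans ((abs_sub_comm _ _).trans_le (hp x y))) hsurj'
    _ ≤ kmedoidsCost d' (F d) + ε * (Fintype.card X - k) := by gcongr; exact hopt' _ hsurj
    _ ≤ kmedoidsCost d (F d) + 2 * (ε * (Fintype.card X - k)) := by
        linarith [kmedoidsCost_le_add_of_sub_le hd.2.1 hd'.2.1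
          (fun x y => (le_abs_self _).trans (hp x y)) hsurj]
    _ ≤ kmedoidsCost d (F d) + c₀ := by linarith
end

section
/- If a data set (X,d) is (α², k)-strictly separable with witnessing clustering C, and d' is an α-multiplicative perturbation of d, then (X,d') is (1, k)-strictly separable with the same witnessing clustering C. That is, under d', every in-cluster distance is at most every between-cluster distance. -/
open Finset

section Separation

variable {X ι : Type*}

def StrictlySeparates (β : ℝ) (d : X → X → ℝ) (c : X → ι) : Prop :=
  ∀ x y z, c x = c y → c x ≠ c z → β * d x y ≤ d x z

def IsMulPerturbation (α : ℝ) (d d' : X → X → ℝ) : Prop :=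
  ∀ x y, α⁻¹ * d x y ≤ d' x y ∧ d' x y ≤ α * d x y

theorem StrictlySeparates.of_isMulPerturbation {α β : ℝ} {d d' : X → X → ℝ} {c : X → ι}
    (hα : 0 < α) (hβ : 0 ≤ β) (hsep : StrictlySeparates (α ^ 2 * β) d c)
    (hpert : IsMulPerturbation α d d') : StrictlySeparates β d' c := by
  intro x y z hxy hxz
  calc β * d' x y ≤ β * (α * d x y) := mul_le_mul_of_nonneg_left (hpert x y).2 hβ
    _ = α⁻¹ * (α ^ 2 * β * d x y) := by field_simp
    _ ≤ α⁻¹ * d x z := by gcongr; exact hsep x y z hxy hxz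
    _ ≤ d' x z := (hpert x z).1

end Separation

theorem strictly_separable_multiplicative_perturbation_general
    {X : Type*} {k : ℕ} (c : X → Fin k)
    (α : ℝ) (hα : 1 < α) (d d' : X → X → ℝ)
    (hsep : ∀ x y z : X, c x = c y → c x ≠ c z → α ^ 2 * d x y ≤ d x z)
    (hpert : ∀ x y, α⁻¹ * d x y ≤ d' x y ∧ d' x y ≤ α * d x y) :
    ∀ x y z : X, c x = c y → c x ≠ c z → 1 * d' x y ≤ d' x z :=
  StrictlySeparates.of_isMulPerturbation (zero_lt_one.trans hα) zero_le_one
    (by simpa only [StrictlySeparates, mul_one] using hsep) hpert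

/-- If `(X, d)` is `(α², k)`-strictly separable with witnessing clustering `c`, then after any
`α`-multiplicative perturbation `d'`, `(X, d')` is `(1, k)`-strictly separable with the same
witness: every in-cluster distance is at most every between-cluster distance. -/
theorem strictly_separable_multiplicative_perturbation
    {X : Type*} {k : ℕ} (c : X → Fin k)
    (α : ℝ) (hα : 1 < α) (d d' : X → X → ℝ)
    (hd : IsDissim d) (hd' : IsDissim d')
    (hsep : ∀ x y z : X, c x = c y → c x ≠ c z → α ^ 2 * d x y ≤ d x z)
    (hpert : ∀ x y, α⁻¹ * d x y ≤ d' x y ∧ d' x y ≤ α * d x y) :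
    ∀ x y z : X, c x = c y → c x ≠ c z → 1 * d' x y ≤ d' x z :=
  strictly_separable_multiplicative_perturbation_general c α hα d d' hsep hpert
end
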